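/- Let D > 0 be real and let s ∈ ℂ with Re(s) > 0. Let u : ℝ → (EuclideanSpace ℝ (Fin 2) → ℂ) and fix a point x. Assume: (i) for every t ≥ 0 the map t ↦ u t x has derivative D • Δ(u t)(x) at t (the heat equation holds at x); (ii) there is a constant C such that ‖u t x‖ ≤ C and ‖Δ(u t)(x)‖ ≤ C for all t ≥ 0, and the maps t ↦ u t x and t ↦ Δ(u t)(x) are continuous on [0,∞); (iii) the Laplacian commutes with the transform integral at x, i.e. Δ(û)(x) = ∫_{t ∈ (0,∞)} exp(−s·t) · Δ(u t)(x) dt, where û(y) := ∫_{t ∈ (0,∞)} exp(−s·t) · u t y dt. Then the Laplace transform satisfies the modified Helmholtz equation at x: D • Δ(û)(x) − s · û(x) = − u 0 x. -/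

import Mathlib

open MeasureTheory Set

/-- The Laplacian of a function on `EuclideanSpace ℝ (Fin 2)`, as the sum of the
second derivatives along the standard orthonormal basis directions (matching Mathlib's
definition of the Laplacian on a Euclidean space). -/
noncomputable def laplacian (f : EuclideanSpace ℝ (Fin 2) → ℂ)
    (x : EuclideanSpace ℝ (Fin 2)) : ℂ :=
  ∑ i : Fin 2, iteratedFDeriv ℝ 2 f x ![EuclideanSpace.single i 1, EuclideanSpace.single i 1]

/-
With `v t = u t x` the heat equation reads `v' t = D • Δ(u t)(x)`. Integrating `e^{-st} v'` by parts
over `(0, ∞)` gives `s v̂ - v 0`, the boundary term at infinity vanishing because `v` is bounded and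
`Re s > 0`; the left side is `D` times the transform of the Laplacian, which by assumption is the
Laplacian of the transform.
-/

open Filter Topology

noncomputable section

variable {E : Type*} [NormedAddCommGroup E] [NormedSpace ℂ E]

def laplaceTransform (v : ℝ → E) (s : ℂ) : E :=
  ∫ t in Ioi (0 : ℝ), Complex.exp (-(s * t)) • v t

lemma norm_cexp_neg_mul_ofReal (s : ℂ) (t : ℝ) :
    ‖Complex.exp (-(s * t))‖ = Real.exp (-(s.re * t)) := by
  simp [Complex.norm_exp, Complex.mul_re]

lemma norm_cexp_neg_mul_smul_le {s : ℂ} {v : ℝ → E} {C : ℝ} {t : ℝ} (hv : ‖v t‖ ≤ C) :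
    ‖Complex.exp (-(s * t)) • v t‖ ≤ C * Real.exp (-(s.re * t)) := by
  rw [norm_smul, norm_cexp_neg_mul_ofReal, mul_comm C]
  exact mul_le_mul_of_nonneg_left hv (Real.exp_pos _).le

lemma tendsto_cexp_neg_mul_smul_atTop {s : ℂ} (hs : 0 < s.re) {v : ℝ → E} {C : ℝ}
    (hb : ∀ᶠ t in atTop, ‖v t‖ ≤ C) :
    Tendsto (fun t : ℝ => Complex.exp (-(s * t)) • v t) atTop (𝓝 0) := by
  refine squeeze_zero_norm' (hb.mono fun t ht => norm_cexp_neg_mul_smul_le ht) ?_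
  have hexp : Tendsto (fun t : ℝ => Real.exp (-(s.re * t))) atTop (𝓝 0) :=
    Real.tendsto_exp_atBot.comp <| tendsto_neg_atTop_atBot.comp <|
      tendsto_id.const_mul_atTop hs
  simpa using hexp.const_mul C

lemma integrableOn_cexp_neg_mul_smul {s : ℂ} (hs : 0 < s.re) {v : ℝ → E} {C : ℝ}
    (hb : ∀ t > 0, ‖v t‖ ≤ C) (hc : ContinuousOn v (Ioi 0)) :
    IntegrableOn (fun t : ℝ => Complex.exp (-(s * t)) • v t) (Ioi 0) := by
  have hmeas : AEStronglyMeasurable (fun t : ℝ => Complex.exp (-(s * t)) • v t)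
      (volume.restrict (Ioi 0)) :=
    ((by fun_prop : Continuous fun t : ℝ => Complex.exp (-(s * t))).continuousOn.smul hc
      ).aestronglyMeasurable measurableSet_Ioi
  refine Integrable.mono' ((exp_neg_integrableOn_Ioi 0 hs).const_mul C) hmeas ?_
  filter_upwards [ae_restrict_mem measurableSet_Ioi] with t ht
  simpa [neg_mul] using norm_cexp_neg_mul_smul_le (s := s) (hb t ht)

theorem laplaceTransform_of_hasDerivAt [CompleteSpace E] {s : ℂ} (hs : 0 < s.re)
    {v v' : ℝ → E} {C : ℝ}
    (hv : ∀ t ≥ 0, HasDerivAt v (v' t) t) (hb : ∀ t ≥ 0, ‖v t‖ ≤ C)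
    (hv' : IntegrableOn (fun t : ℝ => Complex.exp (-(s * t)) • v' t) (Ioi 0)) :
    laplaceTransform v' s = s • laplaceTransform v s - v 0 := by
  have hint : IntegrableOn (fun t : ℝ => Complex.exp (-(s * t)) • v t) (Ioi 0) :=
    integrableOn_cexp_neg_mul_smul hs (fun t ht => hb t ht.le)
      fun t ht => (hv t ht.le).continuousAt.continuousWithinAt
  have hderiv : ∀ t ∈ Ici (0 : ℝ), HasDerivAt (fun τ : ℝ => Complex.exp (-(s * τ)) • v τ)
      (Complex.exp (-(s * t)) • v' t - s • (Complex.exp (-(s * t)) • v t)) t := by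
    intro t ht
    have hexp : HasDerivAt (fun τ : ℝ => Complex.exp (-(s * τ)))
        (Complex.exp (-(s * t)) * -s) t := by
      simpa using (((hasDerivAt_id (t : ℂ)).const_mul s).neg.comp_ofReal).cexp
    refine (hexp.smul (hv t ht)).congr_deriv ?_
    rw [mul_smul, smul_comm, neg_smul, sub_eq_add_neg, add_comm]
  have hFTC := integral_Ioi_of_hasDerivAt_of_tendsto' hderiv (hv'.sub (hint.fun_smul s))
    (tendsto_cexp_neg_mul_smul_atTop hs (eventually_atTop.2 ⟨0, hb⟩))
  rw [integral_sub hv' (hint.fun_smul s), integral_smul] at hFTC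
  simp only [Complex.ofReal_zero, mul_zero, neg_zero, Complex.exp_zero, one_smul, zero_sub] at hFTC
  rw [laplaceTransform, laplaceTransform, sub_eq_neg_add, ← hFTC]
  abel

end

theorem heat_laplace_transform_modified_helmholtz_general
    (D : ℝ) (s : ℂ) (hs : 0 < s.re)
    (u : ℝ → EuclideanSpace ℝ (Fin 2) → ℂ) (x : EuclideanSpace ℝ (Fin 2))
    (hheat : ∀ t : ℝ, 0 ≤ t → HasDerivAt (fun τ => u τ x) (D • laplacian (u t) x) t)
    (C : ℝ)
    (hbound : ∀ t : ℝ, 0 ≤ t → ‖u t x‖ ≤ C ∧ ‖laplacian (u t) x‖ ≤ C)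
    (hcont' : ContinuousOn (fun t => laplacian (u t) x) (Set.Ici 0))
    (hcomm :
      laplacian (fun y => ∫ t in Ioi (0:ℝ), Complex.exp (-(s * t)) * u t y) x
        = ∫ t in Ioi (0:ℝ), Complex.exp (-(s * t)) * laplacian (u t) x) :
    D • laplacian (fun y => ∫ t in Ioi (0:ℝ), Complex.exp (-(s * t)) * u t y) x
      - s * (∫ t in Ioi (0:ℝ), Complex.exp (-(s * t)) * u t x) = -(u 0 x) := by
  have hΔint : IntegrableOn (fun t : ℝ => Complex.exp (-(s * t)) • laplacian (u t) x) (Ioi 0) :=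
    integrableOn_cexp_neg_mul_smul hs (fun t ht => (hbound t ht.le).2)
      (hcont'.mono Ioi_subset_Ici_self)
  have hDΔint : IntegrableOn
      (fun t : ℝ => Complex.exp (-(s * t)) • (D • laplacian (u t) x)) (Ioi 0) :=
    IntegrableOn.congr_fun (hΔint.fun_smul D) (fun t _ => smul_comm _ _ _) measurableSet_Ioi
  have htransform := laplaceTransform_of_hasDerivAt hs hheat (fun t ht => (hbound t ht).1) hDΔint
  simp only [laplaceTransform, smul_comm _ D, integral_smul, smul_eq_mul] at htransform
  rw [hcomm, htransform]
  ring

/-- If `u` solves the planar heat equation `∂u/∂t = D Δu` at the point `x`, with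
uniformly bounded and continuous data on `[0,∞)`, and the Laplacian commutes with the
Laplace transform integral at `x`, then the Laplace transform
`û(y) = ∫_{t ∈ (0,∞)} e^{-st} u t y dt` satisfies the modified Helmholtz equation
`D Δû − s û = −u₀` at `x`. -/
theorem heat_laplace_transform_modified_helmholtz
    (D : ℝ) (hD : 0 < D) (s : ℂ) (hs : 0 < s.re)
    (u : ℝ → EuclideanSpace ℝ (Fin 2) → ℂ) (x : EuclideanSpace ℝ (Fin 2))
    (hheat : ∀ t : ℝ, 0 ≤ t → HasDerivAt (fun τ => u τ x) (D • laplacian (u t) x) t)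
    (C : ℝ)
    (hbound : ∀ t : ℝ, 0 ≤ t → ‖u t x‖ ≤ C ∧ ‖laplacian (u t) x‖ ≤ C)
    (hcont : ContinuousOn (fun t => u t x) (Set.Ici 0))
    (hcont' : ContinuousOn (fun t => laplacian (u t) x) (Set.Ici 0))
    (hcomm :
      laplacian (fun y => ∫ t in Ioi (0:ℝ), Complex.exp (-(s * t)) * u t y) x
        = ∫ t in Ioi (0:ℝ), Complex.exp (-(s * t)) * laplacian (u t) x) :
    D • laplacian (fun y => ∫ t in Ioi (0:ℝ), Complex.exp (-(s * t)) * u t y) x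
      - s * (∫ t in Ioi (0:ℝ), Complex.exp (-(s * t)) * u t x) = -(u 0 x) :=
  heat_laplace_transform_modified_helmholtz_general D s hs u x hheat C hbound hcont' hcomm
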